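/- Let N ≥ 4, ℓ ≥ 1, and let Γ_ℓ be the subgroup of O(N) generated by G ∪ {ρ_ℓ}. Then for every point x = (z, y) ∈ ℂ² × ℝ^{N−4} ≡ ℝ^N, the orbit Γ_ℓ x := {γx : γ ∈ Γ_ℓ} is infinite if z ≠ 0 and consists of the single point x if z = 0. -/

import Mathlib

open MeasureTheory Filter Metric
open scoped Real ENNReal Topology RealInnerProductSpace

noncomputable section

/-- `ℝ^N`. -/
abbrev RN (N : ℕ) := EuclideanSpace ℝ (Fin N)

/-- The critical Sobolev exponent `p* = Np/(N-p)`. -/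
def pStar (N : ℕ) (p : ℝ) : ℝ := N * p / (N - p)

/-- Test functions: smooth, compactly supported, with support contained in `Ω`. -/
def IsTest (N : ℕ) (Ω : Set (RN N)) (φ : RN N → ℝ) : Prop :=
  ContDiff ℝ (⊤ : ℕ∞) φ ∧ HasCompactSupport φ ∧ tsupport φ ⊆ Ω

/-- `V` is the weak (distributional) gradient of `u`. -/
def IsWeakGrad (N : ℕ) (u : RN N → ℝ) (V : RN N → RN N) : Prop :=
  ∀ φ : RN N → ℝ, ContDiff ℝ (⊤ : ℕ∞) φ → HasCompactSupport φ →
    ∀ i : Fin N, (∫ x, u x * fderiv ℝ φ x (EuclideanSpace.single i 1))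
      = - ∫ x, V x i * φ x

/-- An element of `D^{1,p}(ℝ^N)`: a function in `L^{p*}` together with its weak
gradient, which lies in `L^p`. -/
structure D1p (N : ℕ) (p : ℝ) where
  toFun : RN N → ℝ
  grad : RN N → RN N
  memLp_star : MemLp toFun (ENNReal.ofReal (pStar N p)) volume
  grad_memLp : MemLp grad (ENNReal.ofReal p) volume
  isWeakGrad : IsWeakGrad N toFun grad

/-- `‖u‖_p ^ p`, the `p`-th power of the `D^{1,p}` norm. -/
def gradPow (N : ℕ) (p : ℝ) (u : D1p N p) : ℝ := ∫ x, ‖u.grad x‖ ^ p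

/-- Membership in `D_0^{1,p}(Ω)`: `u` is approximated, in the `D^{1,p}` norm, by
smooth functions with compact support contained in `Ω`. -/
def InD0 (N : ℕ) (p : ℝ) (Ω : Set (RN N)) (u : D1p N p) : Prop :=
  ∃ φ : ℕ → RN N → ℝ, (∀ k, IsTest N Ω (φ k)) ∧
    Tendsto (fun k => ∫ x, ‖gradient (φ k) x - u.grad x‖ ^ p) atTop (𝓝 0)

/-- The best Sobolev constant `S_p` for the embedding `D^{1,p}(ℝ^N) ↪ L^{p*}(ℝ^N)`. -/
def SobolevS (N : ℕ) (p : ℝ) : ℝ :=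
  sInf { r | ∃ u : D1p N p, ¬ (u.toFun =ᵐ[volume] (0 : RN N → ℝ)) ∧
    r = (∫ x, ‖u.grad x‖ ^ p) / (∫ x, |u.toFun x| ^ pStar N p) ^ (p / pStar N p) }

/-- `∫ |u|^{p*/2} |v|^{p*/2}`. -/
def pairInt (N : ℕ) (p : ℝ) (u v : D1p N p) : ℝ :=
  ∫ x, |u.toFun x| ^ (pStar N p / 2) * |v.toFun x| ^ (pStar N p / 2)

/-- The energy functional `J` of the system with coupling matrix `β`. -/
def Jfun (N : ℕ) (p : ℝ) {ℓ : ℕ} (β : Fin ℓ → Fin ℓ → ℝ) (u : Fin ℓ → D1p N p) : ℝ :=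
  (1 / p) * ∑ i, gradPow N p (u i)
    - (1 / pStar N p) * ∑ i, ∑ j, β i j * pairInt N p (u j) (u i)

/-- The Nehari-type set `M(Ω)`: all components are nontrivial and `∂_i J(u) u_i = 0`. -/
def InNehariM (N : ℕ) (p : ℝ) {ℓ : ℕ} (Ω : Set (RN N)) (β : Fin ℓ → Fin ℓ → ℝ)
    (u : Fin ℓ → D1p N p) : Prop :=
  (∀ i, InD0 N p Ω (u i)) ∧
  ∀ i, ¬ ((u i).toFun =ᵐ[volume] (0 : RN N → ℝ)) ∧
    gradPow N p (u i) = ∑ j, β i j * pairInt N p (u j) (u i)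

/-- `μ(Ω) = inf_{M(Ω)} J`. -/
def muOmega (N : ℕ) (p : ℝ) {ℓ : ℕ} (Ω : Set (RN N)) (β : Fin ℓ → Fin ℓ → ℝ) : ℝ :=
  sInf (Jfun N p β '' { u | InNehariM N p Ω β u })

/-- `u` is a weak solution, with components in `D_0^{1,p}(Ω)`, of the system
`-Δ_p u_i = Σ_j β_ij |u_j|^{p*/2} |u_i|^{p*/2-2} u_i` in `Ω`. -/
def IsSystemSol (N : ℕ) (p : ℝ) {ℓ : ℕ} (Ω : Set (RN N)) (β : Fin ℓ → Fin ℓ → ℝ)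
    (u : Fin ℓ → D1p N p) : Prop :=
  (∀ i, InD0 N p Ω (u i)) ∧
  ∀ i, ∀ φ : RN N → ℝ, IsTest N Ω φ →
    (∫ x, ‖(u i).grad x‖ ^ (p - 2) * (inner ℝ ((u i).grad x) (gradient φ x) : ℝ))
      = ∫ x, (∑ j, β i j * |(u j).toFun x| ^ (pStar N p / 2) *
          |(u i).toFun x| ^ (pStar N p / 2 - 2) * (u i).toFun x) * φ x

/-- `w` is a weak solution of the critical equation `-Δ_p w = |w|^{p*-2} w` in `ℝ^N`. -/
def IsEqSol (N : ℕ) (p : ℝ) (w : D1p N p) : Prop :=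
  ∀ φ : RN N → ℝ, ContDiff ℝ (⊤ : ℕ∞) φ → HasCompactSupport φ →
    (∫ x, ‖w.grad x‖ ^ (p - 2) * (inner ℝ (w.grad x) (gradient φ x) : ℝ))
      = ∫ x, |w.toFun x| ^ (pStar N p - 2) * w.toFun x * φ x

/-- A function changes sign: both `{u > 0}` and `{u < 0}` have positive measure. -/
def SignChanging (N : ℕ) (u : RN N → ℝ) : Prop :=
  0 < volume {x | 0 < u x} ∧ 0 < volume {x | u x < 0}

/-- A function is nonradial: it is not a.e. equal to any radial function. -/
def Nonradial (N : ℕ) (u : RN N → ℝ) : Prop :=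
  ¬ ∃ f : ℝ → ℝ, ∀ᵐ x, u x = f ‖x‖

/-- A domain: a nonempty connected open set. -/
def IsDomainSet (N : ℕ) (Ω : Set (RN N)) : Prop := IsOpen Ω ∧ IsConnected Ω

/-- `m_i = (1/N) β_ii^{-(N-p)/p} S_p^{N/p}`. -/
def mI (N : ℕ) (p b : ℝ) : ℝ :=
  (1 / (N : ℝ)) * b ^ (-(((N : ℝ) - p) / p)) * SobolevS N p ^ ((N : ℝ) / p)

/-! ### The symmetries -/

/-- The action of a unit complex number `g` on `ℝ^N ≡ ℂ² × ℝ^{N-4}`: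
`g(z₁, z₂, y) = (g z₁, ḡ z₂, y)`. -/
def cAct (N : ℕ) (g : ℂ) : RN N → RN N :=
  if h4 : 4 ≤ N then fun x =>
    let w1 : ℂ := g * ⟨x ⟨0, by omega⟩, x ⟨1, by omega⟩⟩
    let w2 : ℂ := (starRingEnd ℂ) g * ⟨x ⟨2, by omega⟩, x ⟨3, by omega⟩⟩
    WithLp.toLp 2 fun i => if (i : ℕ) = 0 then w1.re else if (i : ℕ) = 1 then w1.im
      else if (i : ℕ) = 2 then w2.re else if (i : ℕ) = 3 then w2.im else x i
  else fun x => x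

/-- `τ(z₁, z₂) = (-z̄₂, z̄₁)` on `ℂ²`. -/
def tauC (z : ℂ × ℂ) : ℂ × ℂ := (-((starRingEnd ℂ) z.2), (starRingEnd ℂ) z.1)

/-- `(cos θ) z + (sin θ) τz` on `ℂ²`. -/
def rotC (θ : ℝ) (z : ℂ × ℂ) : ℂ × ℂ :=
  ((Real.cos θ : ℂ) * z.1 + (Real.sin θ : ℂ) * (tauC z).1,
   (Real.cos θ : ℂ) * z.2 + (Real.sin θ : ℂ) * (tauC z).2)

/-- The map `(z, y) ↦ ((cos θ) z + (sin θ) τz, y)` on `ℝ^N ≡ ℂ² × ℝ^{N-4}`. -/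
def rotMap (N : ℕ) (θ : ℝ) : RN N → RN N :=
  if h4 : 4 ≤ N then fun x =>
    let w := rotC θ (⟨x ⟨0, by omega⟩, x ⟨1, by omega⟩⟩, ⟨x ⟨2, by omega⟩, x ⟨3, by omega⟩⟩)
    WithLp.toLp 2 fun i => if (i : ℕ) = 0 then w.1.re else if (i : ℕ) = 1 then w.1.im
      else if (i : ℕ) = 2 then w.2.re else if (i : ℕ) = 3 then w.2.im else x i
  else fun x => x

/-- `ρ_ℓ = rotation by π/ℓ`. -/
def rhoMap (N ℓ : ℕ) : RN N → RN N := rotMap N (Real.pi / ℓ)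

/-- `G`-invariance of a function on `ℝ^N`. -/
def GInv (N : ℕ) (u : RN N → ℝ) : Prop :=
  ∀ g : ℂ, ‖g‖ = 1 → ∀ x, u (cAct N g x) = u x

/-- The pinwheel symmetry conditions `(P₁)` and `(P₂)`. -/
def Pinwheel (N : ℕ) (p : ℝ) {ℓ : ℕ} [NeZero ℓ] (u : Fin ℓ → D1p N p) : Prop :=
  (∀ j, GInv N (u j).toFun) ∧
  ∀ j : Fin ℓ, ∀ x, (u (j + 1)).toFun x = (u j).toFun (rhoMap N ℓ x)

/-- The coupling matrix of the symmetric system: `β_ii = 1`, `β_ij = β` for `i ≠ j`. -/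
def symbeta (ℓ : ℕ) (β : ℝ) : Fin ℓ → Fin ℓ → ℝ := fun i j => if i = j then 1 else β

/-- Membership in `𝒟(Ω)`: components in `D_0^{1,p}(Ω)` with pinwheel symmetries. -/
def InDD (N : ℕ) (p : ℝ) {ℓ : ℕ} [NeZero ℓ] (Ω : Set (RN N)) (u : Fin ℓ → D1p N p) : Prop :=
  (∀ i, InD0 N p Ω (u i)) ∧ Pinwheel N p u

/-- Membership in the Nehari set `𝒩(Ω)`: `u ∈ 𝒟(Ω)`, `u ≠ 0` and `J'(u)u = 0`. -/
def InNehariPinwheel (N : ℕ) (p : ℝ) {ℓ : ℕ} [NeZero ℓ] (Ω : Set (RN N)) (β : ℝ)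
    (u : Fin ℓ → D1p N p) : Prop :=
  InDD N p Ω u ∧ (¬ ∀ i, (u i).toFun =ᵐ[volume] (0 : RN N → ℝ)) ∧
  ∑ i, gradPow N p (u i) = ∑ i, ∑ j, symbeta ℓ β i j * pairInt N p (u j) (u i)

/-- `c(Ω) = inf_{𝒩(Ω)} J`. -/
def cOmega (N : ℕ) (p : ℝ) (ℓ : ℕ) [NeZero ℓ] (Ω : Set (RN N)) (β : ℝ) : ℝ :=
  sInf (Jfun N p (symbeta ℓ β) '' { u | InNehariPinwheel N p Ω β u })

/-- A domain invariant under the subgroup of `O(N)` generated by `G ∪ {ρ_ℓ}`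
(equivalently, invariant under each of the generators, since `G` is a group and
`ρ_ℓ` has finite order). -/
def InvariantDomain (N ℓ : ℕ) (Ω : Set (RN N)) : Prop :=
  IsOpen Ω ∧ IsConnected Ω ∧
  (∀ g : ℂ, ‖g‖ = 1 → ∀ x ∈ Ω, cAct N g x ∈ Ω) ∧
  (∀ x ∈ Ω, rhoMap N ℓ x ∈ Ω)

/-- The set `{0} × ℝ^{N-4}`. -/
def zSlice (N : ℕ) : Set (RN N) := { x | ∀ i : Fin N, (i : ℕ) < 4 → x i = 0 }

/-- A least energy pinwheel solution of the symmetric system in `Ω`. -/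
def IsLeastEnergyPinwheelSol (N : ℕ) (p : ℝ) (ℓ : ℕ) [NeZero ℓ] (Ω : Set (RN N)) (β : ℝ)
    (u : Fin ℓ → D1p N p) : Prop :=
  InNehariPinwheel N p Ω β u ∧ IsSystemSol N p Ω (symbeta ℓ β) u ∧
  Jfun N p (symbeta ℓ β) u = cOmega N p ℓ Ω β

/-! ### Matrix realization of the symmetry group -/

/-- Action of a matrix on `ℝ^N`. -/
def matVec (N : ℕ) (A : Matrix (Fin N) (Fin N) ℝ) (x : RN N) : RN N :=
  WithLp.toLp 2 (A.mulVec (fun i => x i))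

/-- The generators of `Γ_ℓ` inside `O(N)`: the elements of `G` and `ρ_ℓ`. -/
def GammaGens (N ℓ : ℕ) : Set (Matrix.orthogonalGroup (Fin N) ℝ) :=
  { γ | (∃ g : ℂ, ‖g‖ = 1 ∧ ∀ x, matVec N γ.1 x = cAct N g x) ∨
        (∀ x, matVec N γ.1 x = rhoMap N ℓ x) }

/-- `Γ_ℓ`: the subgroup of `O(N)` generated by `G ∪ {ρ_ℓ}`. -/
def GammaL (N ℓ : ℕ) : Subgroup (Matrix.orthogonalGroup (Fin N) ℝ) :=
  Subgroup.closure (GammaGens N ℓ)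

/-- The `Γ_ℓ`-orbit of a point. -/
def orbitSet (N ℓ : ℕ) (x : RN N) : Set (RN N) :=
  { y | ∃ γ ∈ GammaL N ℓ, y = matVec N (γ : Matrix (Fin N) (Fin N) ℝ) x }

/-- The pairing `A(u,v) = Σ_i ∫ |∇u_i|^{p-2} ⟨∇u_i, ∇v_i⟩` (the gradient part of `J'(u)v`). -/
def Apair (N : ℕ) (p : ℝ) {ℓ : ℕ} (u v : Fin ℓ → D1p N p) : ℝ :=
  ∑ i, ∫ x, ‖(u i).grad x‖ ^ (p - 2) * (inner ℝ ((u i).grad x) ((v i).grad x) : ℝ)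

/-- The pairing `B(u,v) = Σ_i ∫ (Σ_j β_ij |u_j|^{p*/2} |u_i|^{p*/2-2} u_i) v_i`
(the nonlinear part of `J'(u)v` for the symmetric system). -/
def Bpair (N : ℕ) (p : ℝ) {ℓ : ℕ} (β : ℝ) (u v : Fin ℓ → D1p N p) : ℝ :=
  ∑ i, ∫ x, (∑ j, symbeta ℓ β i j * |(u j).toFun x| ^ (pStar N p / 2) *
      |(u i).toFun x| ^ (pStar N p / 2 - 2) * (u i).toFun x) * (v i).toFun x

end


section AuxLemmas

open Complex

/-- Block rotation matrix realizing `cAct` for `g = exp(θ I)`. -/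
noncomputable def Mrot (N : ℕ) (θ : ℝ) : Matrix (Fin N) (Fin N) ℝ := fun i j =>
  if (i:ℕ) = 0 then (if (j:ℕ) = 0 then Real.cos θ else if (j:ℕ) = 1 then -Real.sin θ else 0)
  else if (i:ℕ) = 1 then (if (j:ℕ) = 0 then Real.sin θ else if (j:ℕ) = 1 then Real.cos θ else 0)
  else if (i:ℕ) = 2 then (if (j:ℕ) = 2 then Real.cos θ else if (j:ℕ) = 3 then Real.sin θ else 0)
  else if (i:ℕ) = 3 then (if (j:ℕ) = 2 then -Real.sin θ else if (j:ℕ) = 3 then Real.cos θ else 0)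
  else if i = j then 1 else 0

lemma sum_eq_pair' {N : ℕ} (f : Fin N → ℝ) (a b : Fin N) (hab : a ≠ b)
    (h : ∀ k, k ≠ a → k ≠ b → f k = 0) : ∑ k, f k = f a + f b := by
  rw [← Finset.sum_pair hab]
  refine (Finset.sum_subset (Finset.subset_univ _) ?_).symm
  intro k _ hk
  simp only [Finset.mem_insert, Finset.mem_singleton, not_or] at hk
  exact h k hk.1 hk.2

lemma sum_eq_single'' {N : ℕ} (f : Fin N → ℝ) (a : Fin N)
    (h : ∀ k, k ≠ a → f k = 0) : ∑ k, f k = f a :=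
  Finset.sum_eq_single_of_mem a (Finset.mem_univ a) (fun k _ hk => h k hk)

lemma Mrot_mulVec {N : ℕ} (hN : 4 ≤ N) (θ : ℝ) (v : Fin N → ℝ) (i : Fin N) :
    (Mrot N θ).mulVec v i =
      if (i:ℕ) = 0 then Real.cos θ * v ⟨0, by omega⟩ - Real.sin θ * v ⟨1, by omega⟩
      else if (i:ℕ) = 1 then Real.sin θ * v ⟨0, by omega⟩ + Real.cos θ * v ⟨1, by omega⟩
      else if (i:ℕ) = 2 then Real.cos θ * v ⟨2, by omega⟩ + Real.sin θ * v ⟨3, by omega⟩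
      else if (i:ℕ) = 3 then -(Real.sin θ) * v ⟨2, by omega⟩ + Real.cos θ * v ⟨3, by omega⟩
      else v i := by
  show ∑ j, Mrot N θ i j * v j = _
  by_cases hi0 : (i:ℕ) = 0
  · rw [if_pos hi0, sum_eq_pair' _ (⟨0, by omega⟩ : Fin N) (⟨1, by omega⟩ : Fin N)
      (by simp [Fin.ext_iff])
      (fun k hk0 hk1 => by
        have h0 : (k:ℕ) ≠ 0 := fun h => hk0 (Fin.ext h)
        have h1 : (k:ℕ) ≠ 1 := fun h => hk1 (Fin.ext h)
        simp [Mrot, hi0, h0, h1])]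
    simp [Mrot, hi0]
    ring
  · rw [if_neg hi0]
    by_cases hi1 : (i:ℕ) = 1
    · rw [if_pos hi1, sum_eq_pair' _ (⟨0, by omega⟩ : Fin N) (⟨1, by omega⟩ : Fin N)
        (by simp [Fin.ext_iff])
        (fun k hk0 hk1 => by
          have h0 : (k:ℕ) ≠ 0 := fun h => hk0 (Fin.ext h)
          have h1 : (k:ℕ) ≠ 1 := fun h => hk1 (Fin.ext h)
          simp [Mrot, hi0, hi1, h0, h1])]
      simp [Mrot, hi0, hi1]
    · rw [if_neg hi1]
      by_cases hi2 : (i:ℕ) = 2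
      · rw [if_pos hi2, sum_eq_pair' _ (⟨2, by omega⟩ : Fin N) (⟨3, by omega⟩ : Fin N)
          (by simp [Fin.ext_iff])
          (fun k hk0 hk1 => by
            have h0 : (k:ℕ) ≠ 2 := fun h => hk0 (Fin.ext h)
            have h1 : (k:ℕ) ≠ 3 := fun h => hk1 (Fin.ext h)
            simp [Mrot, hi0, hi1, hi2, h0, h1])]
        simp [Mrot, hi0, hi1, hi2]
      · rw [if_neg hi2]
        by_cases hi3 : (i:ℕ) = 3
        · rw [if_pos hi3, sum_eq_pair' _ (⟨2, by omega⟩ : Fin N) (⟨3, by omega⟩ : Fin N)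
            (by simp [Fin.ext_iff])
            (fun k hk0 hk1 => by
              have h0 : (k:ℕ) ≠ 2 := fun h => hk0 (Fin.ext h)
              have h1 : (k:ℕ) ≠ 3 := fun h => hk1 (Fin.ext h)
              simp [Mrot, hi0, hi1, hi2, hi3, h0, h1])]
          simp [Mrot, hi0, hi1, hi2, hi3]
        · rw [if_neg hi3, sum_eq_single'' _ i
            (fun k hk => by
              have hne : ¬ (i = k) := fun h => hk h.symm
              simp [Mrot, hi0, hi1, hi2, hi3, hne])]
          simp [Mrot, hi0, hi1, hi2, hi3]

lemma Mrot_star {N : ℕ} (θ : ℝ) : star (Mrot N θ) = Mrot N (-θ) := by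
  funext i j
  show star (Mrot N θ j i) = Mrot N (-θ) i j
  simp only [star_trivial, Mrot, Real.cos_neg, Real.sin_neg, neg_neg]
  split_ifs <;> first
    | rfl
    | omega
    | (simp_all only [Fin.ext_iff]; omega)

lemma Mrot_mulVec_cancel {N : ℕ} (hN : 4 ≤ N) (θ : ℝ) (v : Fin N → ℝ) :
    (Mrot N θ).mulVec ((Mrot N (-θ)).mulVec v) = v := by
  funext i
  have hpyth := Real.sin_sq_add_cos_sq θ
  rw [Mrot_mulVec hN]
  simp only [Mrot_mulVec hN, Real.cos_neg, Real.sin_neg]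
  norm_num
  split_ifs with h0 h1 h2 h3
  · rw [show i = (⟨0, by omega⟩ : Fin N) from Fin.ext h0]
    linear_combination v (⟨0, by omega⟩ : Fin N) * hpyth
  · rw [show i = (⟨1, by omega⟩ : Fin N) from Fin.ext h1]
    linear_combination v (⟨1, by omega⟩ : Fin N) * hpyth
  · rw [show i = (⟨2, by omega⟩ : Fin N) from Fin.ext h2]
    linear_combination v (⟨2, by omega⟩ : Fin N) * hpyth
  · rw [show i = (⟨3, by omega⟩ : Fin N) from Fin.ext h3]
    linear_combination v (⟨3, by omega⟩ : Fin N) * hpyth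
  · rfl

lemma Mrot_mem {N : ℕ} (hN : 4 ≤ N) (θ : ℝ) :
    Mrot N θ ∈ Matrix.orthogonalGroup (Fin N) ℝ := by
  rw [Matrix.mem_orthogonalGroup_iff, ← Matrix.conjTranspose_eq_transpose_of_trivial,
    ← Matrix.star_eq_conjTranspose, Mrot_star]
  funext i j
  have h2 : (Mrot N θ * Mrot N (-θ)).mulVec (Pi.single j 1) = Pi.single j 1 := by
    rw [← Matrix.mulVec_mulVec]
    exact Mrot_mulVec_cancel hN θ _
  have h3 := congrFun h2 i
  rw [Matrix.mulVec_single_one] at h3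
  simp only [Matrix.col_apply] at h3
  rw [h3]
  simp [Pi.single_apply, Matrix.one_apply, eq_comm]

lemma matVec_Mrot {N : ℕ} (hN : 4 ≤ N) (θ : ℝ) (x : RN N) :
    matVec N (Mrot N θ) x = cAct N (Complex.exp (θ * Complex.I)) x := by
  ext i
  show (Mrot N θ).mulVec (fun j => x j) i = _
  rw [Mrot_mulVec hN]
  unfold cAct
  rw [dif_pos hN]
  simp only [Complex.mul_re, Complex.mul_im, Complex.exp_ofReal_mul_I_re,
    Complex.exp_ofReal_mul_I_im, Complex.conj_re, Complex.conj_im]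
  split_ifs <;> ring

lemma exp_nat_inj {m n : ℕ}
    (h : Complex.exp ((m:ℝ) * Complex.I) = Complex.exp ((n:ℝ) * Complex.I)) : m = n := by
  rw [Complex.exp_eq_exp_iff_exists_int] at h
  obtain ⟨k, hk⟩ := h
  have him := congrArg Complex.im hk
  simp [Complex.mul_im, Complex.add_im] at him
  rcases eq_or_ne k 0 with rfl | hk0
  · simp at him
    exact_mod_cast him
  · exfalso
    have hirr : Irrational (((2*k : ℤ) : ℝ) * Real.pi) := irrational_pi.intCast_mul (by omega)
    apply hirr.ne_int ((m:ℤ) - (n:ℤ))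
    push_cast
    linarith [him]

lemma cAct_apply0 {N : ℕ} (hN : 4 ≤ N) (g : ℂ) (x : RN N) :
    cAct N g x ⟨0, by omega⟩ = (g * ⟨x ⟨0, by omega⟩, x ⟨1, by omega⟩⟩).re := by
  unfold cAct; rw [dif_pos hN]; rfl

lemma cAct_apply1 {N : ℕ} (hN : 4 ≤ N) (g : ℂ) (x : RN N) :
    cAct N g x ⟨1, by omega⟩ = (g * ⟨x ⟨0, by omega⟩, x ⟨1, by omega⟩⟩).im := by
  unfold cAct; rw [dif_pos hN]; rfl

lemma cAct_apply2 {N : ℕ} (hN : 4 ≤ N) (g : ℂ) (x : RN N) :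
    cAct N g x ⟨2, by omega⟩ = ((starRingEnd ℂ) g * ⟨x ⟨2, by omega⟩, x ⟨3, by omega⟩⟩).re := by
  unfold cAct; rw [dif_pos hN]; rfl

lemma cAct_apply3 {N : ℕ} (hN : 4 ≤ N) (g : ℂ) (x : RN N) :
    cAct N g x ⟨3, by omega⟩ = ((starRingEnd ℂ) g * ⟨x ⟨2, by omega⟩, x ⟨3, by omega⟩⟩).im := by
  unfold cAct; rw [dif_pos hN]; rfl

lemma cAct_act_inj {N : ℕ} (hN : 4 ≤ N) (x : RN N)
    (hx : ¬ ∀ i : Fin N, (i : ℕ) < 4 → x i = 0) :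
    Function.Injective (fun n : ℕ => cAct N (Complex.exp ((n:ℝ) * Complex.I)) x) := by
  set z1 : ℂ := ⟨x ⟨0, by omega⟩, x ⟨1, by omega⟩⟩ with hz1
  set z2 : ℂ := ⟨x ⟨2, by omega⟩, x ⟨3, by omega⟩⟩ with hz2
  have hz : z1 ≠ 0 ∨ z2 ≠ 0 := by
    by_contra hcon
    push_neg at hcon
    obtain ⟨h1, h2⟩ := hcon
    apply hx
    intro i hi
    have e1 := congrArg Complex.re h1
    have e2 := congrArg Complex.im h1
    have e3 := congrArg Complex.re h2
    have e4 := congrArg Complex.im h2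
    simp [hz1, hz2] at e1 e2 e3 e4
    have : (i:ℕ) = 0 ∨ (i:ℕ) = 1 ∨ (i:ℕ) = 2 ∨ (i:ℕ) = 3 := by omega
    rcases this with h | h | h | h
    · rw [show i = (⟨0, by omega⟩ : Fin N) from Fin.ext h]; exact e1
    · rw [show i = (⟨1, by omega⟩ : Fin N) from Fin.ext h]; exact e2
    · rw [show i = (⟨2, by omega⟩ : Fin N) from Fin.ext h]; exact e3
    · rw [show i = (⟨3, by omega⟩ : Fin N) from Fin.ext h]; exact e4
  intro m n h
  simp only at h
  replace h := congrArg WithLp.ofLp h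
  apply exp_nat_inj (m := m) (n := n)
  rcases hz with hz | hz
  · have h0 := congrFun h (⟨0, by omega⟩ : Fin N)
    have h1 := congrFun h (⟨1, by omega⟩ : Fin N)
    rw [cAct_apply0 hN, cAct_apply0 hN] at h0
    rw [cAct_apply1 hN, cAct_apply1 hN] at h1
    have : Complex.exp ((m:ℝ) * Complex.I) * z1 = Complex.exp ((n:ℝ) * Complex.I) * z1 :=
      Complex.ext h0 h1
    exact mul_right_cancel₀ hz this
  · have h2 := congrFun h (⟨2, by omega⟩ : Fin N)
    have h3 := congrFun h (⟨3, by omega⟩ : Fin N)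
    rw [cAct_apply2 hN, cAct_apply2 hN] at h2
    rw [cAct_apply3 hN, cAct_apply3 hN] at h3
    have : (starRingEnd ℂ) (Complex.exp ((m:ℝ) * Complex.I)) * z2
        = (starRingEnd ℂ) (Complex.exp ((n:ℝ) * Complex.I)) * z2 := Complex.ext h2 h3
    have := mul_right_cancel₀ hz this
    exact star_injective this

lemma cAct_fixed {N : ℕ} (hN : 4 ≤ N) (g : ℂ) (x : RN N)
    (hx : ∀ i : Fin N, (i : ℕ) < 4 → x i = 0) : cAct N g x = x := by
  ext i
  unfold cAct
  rw [dif_pos hN]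
  have h0 : x (⟨0, by omega⟩ : Fin N) = 0 := hx _ (by norm_num)
  have h1 : x (⟨1, by omega⟩ : Fin N) = 0 := hx _ (by norm_num)
  have h2 : x (⟨2, by omega⟩ : Fin N) = 0 := hx _ (by norm_num)
  have h3 : x (⟨3, by omega⟩ : Fin N) = 0 := hx _ (by norm_num)
  simp only [h0, h1, h2, h3, Complex.mul_re, Complex.mul_im]
  split_ifs with hc0 hc1 hc2 hc3
  · rw [hx i (by omega)]; ring
  · rw [hx i (by omega)]; ring
  · rw [hx i (by omega)]; ring
  · rw [hx i (by omega)]; ring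
  · rfl

lemma rhoMap_fixed {N ℓ : ℕ} (hN : 4 ≤ N) (x : RN N)
    (hx : ∀ i : Fin N, (i : ℕ) < 4 → x i = 0) : rhoMap N ℓ x = x := by
  ext i
  unfold rhoMap rotMap
  rw [dif_pos hN]
  have h0 : x (⟨0, by omega⟩ : Fin N) = 0 := hx _ (by norm_num)
  have h1 : x (⟨1, by omega⟩ : Fin N) = 0 := hx _ (by norm_num)
  have h2 : x (⟨2, by omega⟩ : Fin N) = 0 := hx _ (by norm_num)
  have h3 : x (⟨3, by omega⟩ : Fin N) = 0 := hx _ (by norm_num)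
  simp only [rotC, tauC, h0, h1, h2, h3]
  norm_num
  split_ifs with hc0 hc1 hc2 hc3
  · rw [hx i (by omega)]
  · rw [hx i (by omega)]
  · rw [hx i (by omega)]
  · rw [hx i (by omega)]
  · rfl

lemma orbit_fixed {N ℓ : ℕ} (hN : 4 ≤ N) (x : RN N)
    (hx : ∀ i : Fin N, (i : ℕ) < 4 → x i = 0) : orbitSet N ℓ x = {x} := by
  have hfix : ∀ γ ∈ GammaL N ℓ, matVec N (γ : Matrix (Fin N) (Fin N) ℝ) x = x := by
    intro γ hγ
    refine Subgroup.closure_induction ?_ ?_ ?_ ?_ hγ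
    · intro γ' hγ'
      rcases hγ' with ⟨g, _, hmat⟩ | hmat
      · rw [hmat x]; exact cAct_fixed hN g x hx
      · rw [hmat x]; exact rhoMap_fixed hN x hx
    · show matVec N ((1 : Matrix.orthogonalGroup (Fin N) ℝ) : Matrix (Fin N) (Fin N) ℝ) x = x
      show WithLp.toLp 2 (Matrix.mulVec 1 (fun i => x i)) = x
      rw [Matrix.one_mulVec]
    · intro a b _ _ ha hb
      show WithLp.toLp 2 (Matrix.mulVec ((a : Matrix (Fin N) (Fin N) ℝ) * (b : Matrix (Fin N) (Fin N) ℝ))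
        (fun i => x i)) = x
      rw [← Matrix.mulVec_mulVec]
      have hb' : Matrix.mulVec (b : Matrix (Fin N) (Fin N) ℝ) (fun i => x i) = fun i => x i := congrArg WithLp.ofLp hb
      rw [hb']
      exact ha
    · intro a _ ha
      have h1 : ((a⁻¹ : Matrix.orthogonalGroup (Fin N) ℝ) : Matrix (Fin N) (Fin N) ℝ)
          * (a : Matrix (Fin N) (Fin N) ℝ) = 1 := by
        have h := inv_mul_cancel a
        calc ((a⁻¹ : Matrix.orthogonalGroup (Fin N) ℝ) : Matrix (Fin N) (Fin N) ℝ)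
              * (a : Matrix (Fin N) (Fin N) ℝ)
            = ((a⁻¹ * a : Matrix.orthogonalGroup (Fin N) ℝ) : Matrix (Fin N) (Fin N) ℝ) := rfl
          _ = 1 := by rw [h]; rfl
      have ha' : Matrix.mulVec (a : Matrix (Fin N) (Fin N) ℝ) (fun i => x i)
          = fun i => x i := congrArg WithLp.ofLp ha
      show WithLp.toLp 2 (Matrix.mulVec ((a⁻¹ : Matrix.orthogonalGroup (Fin N) ℝ) : Matrix (Fin N) (Fin N) ℝ)
        (fun i => x i)) = WithLp.toLp 2 (fun i => x i)
      congr 1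
      calc Matrix.mulVec ((a⁻¹ : Matrix.orthogonalGroup (Fin N) ℝ) : Matrix (Fin N) (Fin N) ℝ)
            (fun i => x i)
          = Matrix.mulVec ((a⁻¹ : Matrix.orthogonalGroup (Fin N) ℝ) : Matrix (Fin N) (Fin N) ℝ)
            (Matrix.mulVec (a : Matrix (Fin N) (Fin N) ℝ) (fun i => x i)) := by rw [ha']
        _ = Matrix.mulVec (((a⁻¹ : Matrix.orthogonalGroup (Fin N) ℝ) : Matrix (Fin N) (Fin N) ℝ)
            * (a : Matrix (Fin N) (Fin N) ℝ)) (fun i => x i) := Matrix.mulVec_mulVec _ _ _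
        _ = Matrix.mulVec 1 (fun i => x i) := by rw [h1]
        _ = fun i => x i := Matrix.one_mulVec _
  ext y
  simp only [Set.mem_singleton_iff, orbitSet, Set.mem_setOf_eq]
  constructor
  · rintro ⟨γ, hγ, rfl⟩
    exact hfix γ hγ
  · rintro rfl
    exact ⟨1, one_mem _, (congrArg (WithLp.toLp 2) (Matrix.one_mulVec (fun i => y i))).symm⟩

end AuxLemmas

section Theorems

theorem stmt11 (N ℓ : ℕ) (hN : 4 ≤ N) (hl : 1 ≤ ℓ) (x : RN N) :
    ((¬ ∀ i : Fin N, (i : ℕ) < 4 → x i = 0) → (orbitSet N ℓ x).Infinite) ∧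
    ((∀ i : Fin N, (i : ℕ) < 4 → x i = 0) → orbitSet N ℓ x = {x}) := by
  constructor
  · intro hx
    refine Set.infinite_of_injective_forall_mem
      (f := fun n : ℕ => cAct N (Complex.exp ((n:ℝ) * Complex.I)) x)
      (cAct_act_inj hN x hx) ?_
    intro n
    refine ⟨⟨Mrot N (n:ℝ), Mrot_mem hN (n:ℝ)⟩, Subgroup.subset_closure ?_,
      (matVec_Mrot hN (n:ℝ) x).symm⟩
    exact Or.inl ⟨Complex.exp ((n:ℝ) * Complex.I), Complex.norm_exp_ofReal_mul_I (n:ℝ),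
      fun y => matVec_Mrot hN (n:ℝ) y⟩
  · intro hx
    exact orbit_fixed hN x hx

end Theorems
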